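/- Let T be a tournament whose strongly connected components, ordered so that every vertex of an earlier component dominates every vertex of a later component, are T₁, …, T_k with k ≥ 2, and let x belong to component T_r with r ≥ 2. Then reversing a single edge from some vertex of T_r to some vertex of T₁ yields a tournament in which x is in the top cycle. -/

import Mathlib

def IsTournament {V : Type*} (r : V → V → Prop) : Prop :=
  (∀ x, ¬ r x x) ∧ ∀ x y, x ≠ y → (r x y ↔ ¬ r y x)

def rev {V : Type*} (r : V → V → Prop) (R : Finset (V × V)) (a b : V) : Prop :=
  ((a, b) ∉ R ∧ r a b) ∨ (b, a) ∈ R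

/-!
Reverse an edge `b → x` with `b` in the first component. In the new tournament `x → b`, and `b`
still dominates every vertex outside the first component. The first component is entered by no
edge from outside, so the paths inside it that witness its strong connectivity never use the
reversed edge, and `b` still reaches all of it.
-/

open Relation

theorem IsTournament.asymm {V : Type*} {r : V → V → Prop} (hT : IsTournament r) {a b : V}
    (hab : r a b) : ¬ r b a := by
  by_cases h : a = b
  · exact (hT.1 a (h ▸ hab)).elim
  · exact (hT.2 a b h).mp hab

theorem rev_singleton_of_ne {V : Type*} [DecidableEq V] {r : V → V → Prop} {a b u w : V}
    (huw : r u w) (hne : (u, w) ≠ (a, b)) : rev r {(a, b)} u w :=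
  Or.inl ⟨by simpa using hne, huw⟩

theorem rev_singleton_swap {V : Type*} [DecidableEq V] (r : V → V → Prop) (a b : V) :
    rev r {(a, b)} b a :=
  Or.inr (Finset.mem_singleton_self _)

theorem Relation.ReflTransGen.mono_of_predClosed {α : Type*} {r p : α → α → Prop} {S : Set α}
    (hS : ∀ u w, r u w → w ∈ S → u ∈ S) (hp : ∀ u w, r u w → w ∈ S → p u w) {a b : α}
    (h : ReflTransGen r a b) (hb : b ∈ S) : ReflTransGen p a b := by
  induction h with
  | refl => exact .refl
  | tail _ hwb ih => exact (ih (hS _ _ hwb hb)).tail (hp _ _ hwb hb)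

theorem IsTournament.le_of_rel_of_mem {V ι : Type*} [LinearOrder ι] {r : V → V → Prop}
    (hT : IsTournament r) {C : ι → Finset V}
    (hdom : ∀ j j' : ι, j < j' → ∀ a ∈ C j, ∀ b ∈ C j', r a b)
    {u w : V} {j j' : ι} (huw : r u w) (hu : u ∈ C j) (hw : w ∈ C j') : j ≤ j' :=
  not_lt.mp fun hlt => hT.asymm huw (hdom j' j hlt w hw u hu)

theorem tc_one_reversal_via_components {V : Type*} [DecidableEq V]
    (r : V → V → Prop) (hT : IsTournament r)
    (k : ℕ) (hk : 2 ≤ k) (C : Fin k → Finset V)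
    (hpart : ∀ v : V, ∃! j : Fin k, v ∈ C j)
    (hne : ∀ j : Fin k, (C j).Nonempty)
    (hscc : ∀ j : Fin k, ∀ a ∈ C j, ∀ b ∈ C j, Relation.ReflTransGen r a b)
    (hdom : ∀ j j' : Fin k, j < j' → ∀ a ∈ C j, ∀ b ∈ C j', r a b)
    (i : Fin k) (hi : 1 ≤ i.val) (x : V) (hx : x ∈ C i) :
    ∃ a ∈ C i, ∃ b ∈ C (⟨0, by omega⟩ : Fin k), r b a ∧
      ∀ y : V, Relation.ReflTransGen (rev r {(b, a)}) x y := by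
  set z : Fin k := ⟨0, by omega⟩
  have hzi : z < i := Fin.lt_def.mpr hi
  have hx₀ : x ∉ C z := fun h => hzi.ne ((hpart x).unique h hx)
  have hpred : ∀ u w, r u w → w ∈ (C z : Set V) → u ∈ (C z : Set V) := fun u w huw hw => by
    obtain ⟨j, hj, -⟩ := hpart u
    have hjz : j = z := Fin.ext (Nat.le_zero.mp (hT.le_of_rel_of_mem hdom huw hj hw))
    exact hjz ▸ hj
  obtain ⟨b, hb⟩ := hne z
  refine ⟨x, hx, b, hb, hdom z i hzi b hb x hx, fun y => ?_⟩
  have hxb : ReflTransGen (rev r {(b, x)}) x b := .single (rev_singleton_swap r b x)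
  obtain ⟨j, hj, -⟩ := hpart y
  rcases Nat.eq_zero_or_pos j.val with hj₀ | hj₀
  · obtain rfl : j = z := Fin.ext hj₀
    refine hxb.trans (((hscc z b hb y hj).mono_of_predClosed hpred (fun u w huw hw => ?_)) hj)
    exact rev_singleton_of_ne huw fun h => hx₀ ((Prod.mk.inj h).2 ▸ hw)
  · by_cases hyx : y = x
    · exact hyx ▸ .refl
    exact hxb.tail (rev_singleton_of_ne (hdom z j hj₀ b hb y hj) fun h => hyx (Prod.mk.inj h).2)
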